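/- arXiv:2510.25292 — 2 statements merged into one kernel-verified Lean document; each statement's English description precedes it below -/
import Mathlib

section
/- Let A ∈ {0,1}^{n×n} and let l, r, p₁,…,p_q > 1 be integers with n = l·p₁⋯p_q·r. Then A admits all of the factorizations (l, p₁p₂⋯p_q r), (p₁l, p₂⋯p_q r), …, (p₁p₂⋯p_q l, r) simultaneously if and only if A admits an (l, p₁, p₂, …, p_q, r) factorization. -/
/-!
If `A` factors both as `B ⊗ C` with `B` of size `a` and as `B' ⊗ C'` with `B'` of size `a·b`,
and `A ≠ 0`, then a true entry `B α α'` exhibits `C` as `D ⊗ C'`, where `D` is the `(α, α')`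
block of size `b` of `B'`. So the factorizations at the splits after `l, p₁l, …` make the right
factor of the first one satisfy the same hypothesis for the shorter list `p₁, …, p_q, r`, and
induction along the list yields the full factorization; the zero matrix factors in every way.
The converse is associativity of `⊗`.
-/

namespace KronPaper

/-- Kronecker product of square binary (Bool-valued) matrices. -/
def kron {m n : ℕ} (A : Matrix (Fin m) (Fin m) Bool) (B : Matrix (Fin n) (Fin n) Bool) :
    Matrix (Fin (m * n)) (Fin (m * n)) Bool :=
  Matrix.of fun i j => by
    have hn : 0 < n := by
      rcases Nat.eq_zero_or_pos n with h | h
      · exact absurd i.isLt (by simp [h])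
      · exact h
    exact
      A ⟨i.val / n, Nat.div_lt_of_lt_mul (lt_of_lt_of_eq i.isLt (mul_comm m n))⟩
        ⟨j.val / n, Nat.div_lt_of_lt_mul (lt_of_lt_of_eq j.isLt (mul_comm m n))⟩
      && B ⟨i.val % n, Nat.mod_lt _ hn⟩ ⟨j.val % n, Nat.mod_lt _ hn⟩

/-- Cast a square matrix along an equality of sizes. -/
def castK {m n : ℕ} (h : m = n) (M : Matrix (Fin m) (Fin m) Bool) :
    Matrix (Fin n) (Fin n) Bool :=
  Matrix.reindex (finCongr h) (finCongr h) M

/-- Iterated Kronecker product of a list of square binary matrices. -/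
def kronList : (ns : List ℕ) →
    ((i : Fin ns.length) → Matrix (Fin (ns.get i)) (Fin (ns.get i)) Bool) →
    Matrix (Fin ns.prod) (Fin ns.prod) Bool
  | [], _ => Matrix.of fun _ _ => true
  | _ :: ns, F => kron (F ⟨0, Nat.succ_pos _⟩) (kronList ns fun i => F i.succ)


/-- Square binary matrices of size `n`. -/
abbrev BMat (n : ℕ) := Matrix (Fin n) (Fin n) Bool

/-- Entries outside the `N × N` square read as `false`: `castK` becomes invisible and
Kronecker products become index arithmetic on `ℕ` (see `padded_kron`). -/
def padded {N : ℕ} (A : BMat N) (i j : ℕ) : Bool :=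
  if h : i < N ∧ j < N then A ⟨i, h.1⟩ ⟨j, h.2⟩ else false

def kronFun (n : ℕ) (f g : ℕ → ℕ → Bool) (i j : ℕ) : Bool :=
  f (i / n) (j / n) && g (i % n) (j % n)

def HasKronFactorization {N : ℕ} (A : BMat N) (m n : ℕ) : Prop :=
  ∃ (B : BMat m) (C : BMat n), padded A = kronFun n (padded B) (padded C)

lemma padded_fin {N : ℕ} (A : BMat N) (i j : Fin N) : padded A i j = A i j := by
  simp [padded]

lemma padded_of_not_lt {N : ℕ} (A : BMat N) {i j : ℕ} (h : ¬(i < N ∧ j < N)) :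
    padded A i j = false :=
  dif_neg h

lemma padded_injective {N : ℕ} :
    Function.Injective (padded : BMat N → ℕ → ℕ → Bool) := by
  intro A A' h
  ext i j
  simpa only [padded_fin] using congrFun (congrFun h i) j

lemma padded_castK {m n : ℕ} (e : m = n) (A : BMat m) : padded (castK e A) = padded A := by
  subst e
  rfl

lemma kron_apply {m n : ℕ} (B : BMat m) (C : BMat n) (i j : Fin (m * n)) :
    kron B C i j = kronFun n (padded B) (padded C) i j := by
  have hn : 0 < n := Nat.pos_of_mul_pos_left (Fin.pos i)
  have hi : (i : ℕ) / n < m := Nat.div_lt_of_lt_mul (mul_comm m n ▸ i.2)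
  have hj : (j : ℕ) / n < m := Nat.div_lt_of_lt_mul (mul_comm m n ▸ j.2)
  simp [kron, kronFun, padded, hi, hj, Nat.mod_lt _ hn]

lemma padded_kron {m n : ℕ} (B : BMat m) (C : BMat n) :
    padded (kron B C) = kronFun n (padded B) (padded C) := by
  funext i j
  by_cases h : i < m * n ∧ j < m * n
  · exact (padded_fin _ ⟨i, h.1⟩ ⟨j, h.2⟩).trans (kron_apply B C _ _)
  rw [padded_of_not_lt _ h]
  rcases Nat.eq_zero_or_pos n with rfl | hn
  · simp [kronFun, padded]
  · simp only [kronFun, padded, Nat.div_lt_iff_lt_mul hn, Nat.mod_lt _ hn]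
    grind

lemma eq_castK_kron_iff {m n N : ℕ} (e : m * n = N) (A : BMat N) (B : BMat m) (C : BMat n) :
    A = castK e (kron B C) ↔ padded A = kronFun n (padded B) (padded C) := by
  rw [← padded_kron, ← padded_castK e]
  exact padded_injective.eq_iff.symm

lemma kronFun_assoc (b c : ℕ) (f g h : ℕ → ℕ → Bool) :
    kronFun c (kronFun b f g) h = kronFun (b * c) f (kronFun c g h) := by
  funext i j
  simp only [kronFun, Nat.div_div_eq_div_mul, mul_comm b c, Nat.mod_mul_right_div_self,
    Nat.mod_mul_right_mod, Bool.and_assoc]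

lemma kronFun_mul_add {n : ℕ} (hn : 0 < n) (f g : ℕ → ℕ → Bool) (α α' i j : ℕ) :
    kronFun n f g (n * α + i) (n * α' + j) =
      kronFun n (fun u v => f (α + u) (α' + v)) g i j := by
  simp only [kronFun, Nat.mul_add_div hn, Nat.mul_add_mod]

lemma kronFun_mul_add_of_lt {n : ℕ} (f g : ℕ → ℕ → Bool) (α α' : ℕ) {i j : ℕ}
    (hi : i < n) (hj : j < n) :
    kronFun n f g (n * α + i) (n * α' + j) = (f α α' && g i j) := by
  rw [kronFun_mul_add (by omega)]
  simp [kronFun, Nat.div_eq_of_lt, Nat.mod_eq_of_lt, hi, hj]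

abbrev allTrue : BMat 1 := Matrix.of fun _ _ => true

lemma kronFun_allTrue_left {n : ℕ} (A : BMat n) :
    kronFun n (padded allTrue) (padded A) = padded A := by
  rw [← padded_kron]
  funext i j
  by_cases h : i < n ∧ j < n
  · simp [padded, h, kron, Nat.mod_eq_of_lt]
  · rw [padded_of_not_lt _ h, padded_of_not_lt _ (by simpa using h)]

lemma kronFun_allTrue_right {n : ℕ} (A : BMat n) :
    kronFun 1 (padded A) (padded allTrue) = padded A := by
  funext i j
  simp [kronFun, padded, Nat.mod_one]

lemma padded_allFalse {N : ℕ} (i j : ℕ) :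
    padded (Matrix.of fun _ _ => false : BMat N) i j = false := by
  simp [padded]

lemma hasKronFactorization_of_kronFun_eq {M b c : ℕ} {f g g' : ℕ → ℕ → Bool} {C : BMat M}
    {C' : BMat c} (hM : M = b * c) (h : f = kronFun M g (padded C))
    (h' : f = kronFun c g' (padded C')) {x y : ℕ} (hxy : f x y = true) :
    HasKronFactorization C b c := by
  subst hM
  set α := x / (b * c)
  set α' := y / (b * c)
  have hg : g α α' = true := by
    rw [h, kronFun, Bool.and_eq_true_iff] at hxy
    exact hxy.1
  let D : BMat b := Matrix.of fun u v => g' (b * α + u) (b * α' + v)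
  refine ⟨D, C', ?_⟩
  suffices C = kron D C' by rw [this, padded_kron]
  ext i j
  have hc : 0 < c := Nat.pos_of_mul_pos_left (Fin.pos i)
  have hi : (i : ℕ) / c < b := Nat.div_lt_of_lt_mul (mul_comm b c ▸ i.2)
  have hj : (j : ℕ) / c < b := Nat.div_lt_of_lt_mul (mul_comm b c ▸ j.2)
  have hα : b * c * α = c * (b * α) := by ring
  have hα' : b * c * α' = c * (b * α') := by ring
  calc C i j = kronFun (b * c) g (padded C) (b * c * α + i) (b * c * α' + j) := by
        rw [kronFun_mul_add_of_lt _ _ _ _ i.2 j.2, hg, Bool.true_and, padded_fin]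
    _ = kronFun c g' (padded C') (c * (b * α) + i) (c * (b * α') + j) := by
        rw [← h, h', hα, hα']
    _ = kron D C' i j := by
        rw [kronFun_mul_add hc, kron_apply]
        simp [kronFun, padded, D, hi, hj]

lemma padded_kronList_cons (a : ℕ) (t : List ℕ)
    (F : (i : Fin (a :: t).length) → BMat ((a :: t).get i)) :
    padded (kronList (a :: t) F) =
      kronFun t.prod (padded (F 0)) (padded (kronList t fun i => F i.succ)) :=
  padded_kron _ _

lemma hasKronFactorization_kronList (ns : List ℕ) (F : (i : Fin ns.length) → BMat (ns.get i))
    (k : ℕ) : HasKronFactorization (kronList ns F) (ns.take k).prod (ns.drop k).prod := by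
  induction ns generalizing k with
  | nil =>
    simp only [List.take_nil, List.drop_nil]
    exact ⟨allTrue, allTrue, (kronFun_allTrue_left allTrue).symm⟩
  | cons a t ih =>
    cases k with
    | zero => exact ⟨allTrue, kronList (a :: t) F, (kronFun_allTrue_left _).symm⟩
    | succ k =>
      obtain ⟨B, C, hBC⟩ := ih (fun i => F i.succ) k
      refine ⟨kron (F 0) B, C, ?_⟩
      calc padded (kronList (a :: t) F)
          = kronFun ((t.take k).prod * (t.drop k).prod) (padded (F 0))
              (kronFun (t.drop k).prod (padded B) (padded C)) := by
            rw [padded_kronList_cons, hBC, List.prod_take_mul_prod_drop]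
        _ = kronFun (t.drop k).prod (padded (kron (F 0) B)) (padded C) := by
            rw [padded_kron, kronFun_assoc]

lemma exists_eq_kronList_of_hasKronFactorization {a : ℕ} {t : List ℕ} (A : BMat (a :: t).prod)
    (h : ∀ k, 0 < k → k < (a :: t).length →
      HasKronFactorization A ((a :: t).take k).prod ((a :: t).drop k).prod) :
    ∃ F, A = kronList (a :: t) F := by
  induction t generalizing a with
  | nil =>
    refine ⟨Fin.cases (castK (mul_one a) A) finZeroElim, padded_injective ?_⟩
    exact ((padded_kron _ _).trans (kronFun_allTrue_right _)).trans (padded_castK _ _) |>.symm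
  | cons b t ih =>
    by_cases hA : padded A = fun _ _ => false
    · refine ⟨fun _ => Matrix.of fun _ _ => false, padded_injective ?_⟩
      rw [hA, padded_kronList_cons]
      funext i j
      rw [kronFun, padded_allFalse, Bool.false_and]
    obtain ⟨x, y, hxy⟩ : ∃ x y, padded A x y = true := by
      by_contra hne
      push Not at hne
      exact hA (funext fun x => funext fun y => by simpa using hne x y)
    obtain ⟨B, C, hBC⟩ : ∃ (B : BMat (a * 1)) (C : BMat (b :: t).prod),
        padded A = kronFun (b :: t).prod (padded B) (padded C) :=
      h 1 one_pos (by simp)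
    have hC : ∀ k, 0 < k → k < (b :: t).length →
        HasKronFactorization C ((b :: t).take k).prod ((b :: t).drop k).prod := by
      intro k hk hkt
      obtain ⟨B', C', hBC'⟩ := h (k + 1) (by omega) (by simpa using hkt)
      exact hasKronFactorization_of_kronFun_eq (List.prod_take_mul_prod_drop _ _).symm hBC hBC' hxy
    obtain ⟨F, rfl⟩ := ih C hC
    refine ⟨Fin.cases (castK (mul_one a) B) F, padded_injective ?_⟩
    rw [hBC, ← padded_castK (mul_one a) B]
    exact (padded_kron _ _).symm

theorem exists_eq_castK_kronList_iff {N a : ℕ} {t : List ℕ} (e : (a :: t).prod = N)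
    (A : BMat N) :
    (∃ F, A = castK e (kronList (a :: t) F)) ↔
      ∀ k, 0 < k → k < (a :: t).length →
        HasKronFactorization A ((a :: t).take k).prod ((a :: t).drop k).prod := by
  subst e
  constructor
  · rintro ⟨F, rfl⟩ k - -
    exact hasKronFactorization_kronList _ F k
  · exact exists_eq_kronList_of_hasKronFactorization A

/-- `A` admits all the factorizations
`(p₁⋯p_k·l, p_{k+1}⋯p_q·r)` for `k = 0, …, q` iff it admits an
`(l, p₁, …, p_q, r)` factorization. -/
theorem branch_factorizations (l r : ℕ) (P : List ℕ) (A : BMat (l * P.prod * r)) :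
    (∀ k ≤ P.length,
        ∃ (B : BMat ((P.take k).prod * l)) (C : BMat ((P.drop k).prod * r)),
          A = castK (show (P.take k).prod * l * ((P.drop k).prod * r) = l * P.prod * r by
            have h : (P.take k).prod * (P.drop k).prod = P.prod := by
              rw [← List.prod_append, List.take_append_drop]
            rw [← h]; ring) (kron B C)) ↔
      ∃ F, A = castK (show (l :: (P ++ [r])).prod = l * P.prod * r by
          simp [List.prod_append, mul_assoc]) (kronList (l :: (P ++ [r])) F) := by
  have hsizes : ∀ k ≤ P.length,
      HasKronFactorization A ((l :: (P ++ [r])).take (k + 1)).prod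
          ((l :: (P ++ [r])).drop (k + 1)).prod ↔
        HasKronFactorization A ((P.take k).prod * l) ((P.drop k).prod * r) := by
    intro k hk
    rw [List.take_succ_cons, List.drop_succ_cons, List.take_append_of_le_length hk,
      List.drop_append_of_le_length hk, List.prod_cons, List.prod_append, List.prod_singleton,
      mul_comm l (P.take k).prod]
  have hlen : (l :: (P ++ [r])).length = P.length + 2 := by simp
  rw [exists_eq_castK_kronList_iff]
  simp only [eq_castK_kron_iff]
  constructor
  · rintro h (_ | k) hk0 hk
    · exact absurd hk0 (lt_irrefl 0)
    · have hkP : k ≤ P.length := by omega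
      exact (hsizes k hkP).2 (h k hkP)
  · intro h k hk
    exact (hsizes k hk).1 (h (k + 1) k.succ_pos (by omega))

end KronPaper
end

section
/- Let A ∈ {0,1}^{n×n} be nonzero and admit an (n₁,n₂) factorization A = A₁ ⊗ A₂. Then the right factor A₂ is decomposable (i.e., A₂ = P ⊗ Â₂ for some binary matrices P, Â₂ of sizes > 1) if and only if A admits an (n̂₁, n̂₂) factorization with n̂₂ a proper nontrivial divisor of n₂ (i.e., 1 < n̂₂ < n₂ and n̂₂ ∣ n₂). -/
/-!
Identify `Fin (m * n)` with `Fin m × Fin n`. Then the Kronecker product is associative up to this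
reindexing, which turns `A₁ ⊗ (P ⊗ Q)` into `(A₁ ⊗ P) ⊗ Q`. Conversely, if `A₁ ⊗ A₂ = B ⊗ C` with
`n₂ = q * b`, pick an entry `A₁ i j = true`: the `(i, j)` block of `A₁ ⊗ A₂` (blocks of size `n₂`)
is `A₂`, while, reading `B` in `q × q` blocks, the same block of `B ⊗ C` is `Bᵢⱼ ⊗ C`.
-/

namespace KronPaper

section Kronecker

variable {m n k : ℕ}

theorem kron_apply_s9 (A : BMat m) (B : BMat n) (x y : Fin (m * n)) :
    kron A B x y =
      (A (finProdFinEquiv.symm x).1 (finProdFinEquiv.symm y).1 &&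
        B (finProdFinEquiv.symm x).2 (finProdFinEquiv.symm y).2) :=
  rfl

@[simp]
theorem kron_apply_finProdFinEquiv (A : BMat m) (B : BMat n) (i j : Fin m) (u v : Fin n) :
    kron A B (finProdFinEquiv (i, u)) (finProdFinEquiv (j, v)) = (A i j && B u v) := by
  simp only [kron_apply_s9, Equiv.symm_apply_apply]

theorem ext_finProdFinEquiv {M N : BMat (m * n)}
    (h : ∀ i j u v, M (finProdFinEquiv (i, u)) (finProdFinEquiv (j, v)) =
      N (finProdFinEquiv (i, u)) (finProdFinEquiv (j, v))) : M = N := by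
  ext x y
  obtain ⟨⟨i, u⟩, rfl⟩ := finProdFinEquiv.surjective x
  obtain ⟨⟨j, v⟩, rfl⟩ := finProdFinEquiv.surjective y
  exact h i j u v

@[simp]
theorem castK_rfl (M : BMat m) : castK rfl M = M :=
  rfl

theorem fin_cast_finProdFinEquiv_assoc (i : Fin m) (j : Fin n) (l : Fin k) :
    Fin.cast (mul_assoc m n k).symm (finProdFinEquiv (i, finProdFinEquiv (j, l))) =
      finProdFinEquiv (finProdFinEquiv (i, j), l) := by
  ext
  simp only [Fin.val_cast, finProdFinEquiv_apply_val]
  ring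

@[simp]
theorem castK_mul_assoc_apply (M : BMat (m * n * k)) (i i' : Fin m) (j j' : Fin n)
    (l l' : Fin k) :
    castK (mul_assoc m n k) M (finProdFinEquiv (i, finProdFinEquiv (j, l)))
        (finProdFinEquiv (i', finProdFinEquiv (j', l'))) =
      M (finProdFinEquiv (finProdFinEquiv (i, j), l))
        (finProdFinEquiv (finProdFinEquiv (i', j'), l')) := by
  simp only [castK, Matrix.reindex_apply, Matrix.submatrix_apply, finCongr_symm,
    finCongr_apply, fin_cast_finProdFinEquiv_assoc]

theorem kron_assoc (A : BMat m) (B : BMat n) (C : BMat k) :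
    kron A (kron B C) = castK (mul_assoc m n k) (kron (kron A B) C) := by
  refine ext_finProdFinEquiv fun i i' u u' => ?_
  obtain ⟨⟨j, l⟩, rfl⟩ := finProdFinEquiv.surjective u
  obtain ⟨⟨j', l'⟩, rfl⟩ := finProdFinEquiv.surjective u'
  simp only [castK_mul_assoc_apply, kron_apply_finProdFinEquiv, Bool.and_assoc]

def block (M : BMat (m * n)) (i j : Fin m) : BMat n :=
  M.submatrix (fun u => finProdFinEquiv (i, u)) (fun v => finProdFinEquiv (j, v))

@[simp]
theorem block_apply (M : BMat (m * n)) (i j : Fin m) (u v : Fin n) :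
    block M i j u v = M (finProdFinEquiv (i, u)) (finProdFinEquiv (j, v)) :=
  rfl

theorem block_kron_of_apply_eq_true {A : BMat m} (B : BMat n) {i j : Fin m}
    (h : A i j = true) : block (kron A B) i j = B := by
  ext u v
  simp [h]

theorem block_castK_kron (B : BMat (m * n)) (C : BMat k) (i j : Fin m) :
    block (castK (mul_assoc m n k) (kron B C)) i j = kron (block B i j) C := by
  refine ext_finProdFinEquiv fun u u' l l' => ?_
  simp only [block_apply, castK_mul_assoc_apply, kron_apply_finProdFinEquiv]

end Kronecker

theorem right_factor_decomposable_iff_general (n₁ n₂ : ℕ)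
    (A₁ : BMat n₁) (A₂ : BMat n₂)
    (hnz : ∃ i j, kron A₁ A₂ i j = true) :
    (∃ p r, 1 < p ∧ 1 < r ∧
        ∃ (h : p * r = n₂) (P : BMat p) (Q : BMat r), A₂ = castK h (kron P Q)) ↔
      ∃ a b, 1 < a ∧ 1 < b ∧ b < n₂ ∧ b ∣ n₂ ∧
        ∃ (h : a * b = n₁ * n₂) (B : BMat a) (C : BMat b),
          kron A₁ A₂ = castK h (kron B C) := by
  obtain ⟨x, y, hxy⟩ := hnz
  obtain ⟨⟨i, u⟩, rfl⟩ := finProdFinEquiv.surjective x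
  obtain ⟨⟨j, v⟩, rfl⟩ := finProdFinEquiv.surjective y
  rw [kron_apply_finProdFinEquiv, Bool.and_eq_true] at hxy
  have hij : A₁ i j = true := hxy.1
  constructor
  · rintro ⟨p, r, hp, hr, rfl, P, Q, rfl⟩
    refine ⟨n₁ * p, r, ?_, hr, lt_mul_of_one_lt_left (by omega) hp, dvd_mul_left r p,
      mul_assoc n₁ p r, kron A₁ P, Q, ?_⟩
    · exact hp.trans_le (Nat.le_mul_of_pos_left p i.pos)
    · rw [castK_rfl, kron_assoc]
  · rintro ⟨a, b, -, hb, hbn, hdvd, hab, B, C, hA⟩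
    obtain ⟨q, rfl⟩ := exists_eq_mul_left_of_dvd hdvd
    obtain rfl : a = n₁ * q :=
      Nat.eq_of_mul_eq_mul_right (by omega) (hab.trans (mul_assoc n₁ q b).symm)
    refine ⟨q, b, ?_, hb, rfl, block B i j, C, ?_⟩
    · exact Nat.lt_of_mul_lt_mul_right (a := b) (by rwa [one_mul])
    · rw [castK_rfl, ← block_castK_kron, ← hA, block_kron_of_apply_eq_true A₂ hij]

/-- for a nonzero `A = A₁ ⊗ A₂`, the right factor `A₂` is decomposable
iff `A` admits an `(n̂₁, n̂₂)` factorization with `n̂₂` a proper nontrivial divisor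
of `n₂`. -/
theorem right_factor_decomposable_iff (n₁ n₂ : ℕ) (h₁ : 1 < n₁) (h₂ : 1 < n₂)
    (A₁ : BMat n₁) (A₂ : BMat n₂)
    (hnz : ∃ i j, kron A₁ A₂ i j = true) :
    (∃ p r, 1 < p ∧ 1 < r ∧
        ∃ (h : p * r = n₂) (P : BMat p) (Q : BMat r), A₂ = castK h (kron P Q)) ↔
      ∃ a b, 1 < a ∧ 1 < b ∧ b < n₂ ∧ b ∣ n₂ ∧
        ∃ (h : a * b = n₁ * n₂) (B : BMat a) (C : BMat b),
          kron A₁ A₂ = castK h (kron B C) :=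
  right_factor_decomposable_iff_general n₁ n₂ A₁ A₂ hnz

end KronPaper
end
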